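/- Logarithmic growth of the mean in-degree: there exists a finite constant C, depending only on α, such that for every m ≥ 2 the mean of the crowding in-degree process satisfies |μ_m − (1/α)·log m| ≤ C; in particular μ_{N−1} / ((1/α)·log N) tends to 1 as N → ∞. -/
import Mathlib


open Finset Filter

/-- The crowding in-degree process: `P q m r` is the probability of having
accepted `r` edges after `m` proposals, with acceptance probability `q^r`. -/
noncomputable def crowdP (q : ℝ) : ℕ → ℕ → ℝ
  | 0, r => if r = 0 then 1 else 0
  | m + 1, r =>
      crowdP q m r * (1 - q ^ r) +
        (if r = 0 then 0 else crowdP q m (r - 1) * q ^ (r - 1))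

/-- Generating function `G m z = ∑_{r=0}^m P m r · z^r`. -/
noncomputable def crowdG (q : ℝ) (m : ℕ) (z : ℝ) : ℝ :=
  ∑ r ∈ Finset.range (m + 1), crowdP q m r * z ^ r

/-- Centering sequence `x_m = (1/α)·log(1 + (e^α − 1)·m)`. -/
noncomputable def crowdX (α : ℝ) (m : ℕ) : ℝ :=
  (1 / α) * Real.log (1 + (Real.exp α - 1) * m)

/-- Mean `μ_m = ∑_{r=0}^m r · P m r`. -/
noncomputable def crowdMu (q : ℝ) (m : ℕ) : ℝ :=
  ∑ r ∈ Finset.range (m + 1), (r : ℝ) * crowdP q m r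

lemma crowdP_nonneg {q : ℝ} (hq0 : 0 ≤ q) (hq1 : q ≤ 1) : ∀ m r, 0 ≤ crowdP q m r := by
  intro m
  induction m with
  | zero => intro r; simp only [crowdP]; split <;> norm_num
  | succ m ih =>
      intro r
      have h1 : q ^ r ≤ 1 := pow_le_one₀ hq0 hq1
      have h2 : 0 ≤ q ^ (r - 1) := pow_nonneg hq0 _
      simp only [crowdP]
      have := ih r
      have := ih (r - 1)
      split
      · nlinarith
      · nlinarith

lemma crowdP_eq_zero {q : ℝ} : ∀ m r, m < r → crowdP q m r = 0 := by
  intro m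
  induction m with
  | zero => intro r hr; simp only [crowdP]; rw [if_neg (by omega)]
  | succ m ih =>
      intro r hr
      have hr1 : r ≠ 0 := by omega
      simp only [crowdP, if_neg hr1]
      rw [ih r (by omega), ih (r - 1) (by omega)]
      ring

lemma crowdP_diag_pos {q : ℝ} (hq0 : 0 < q) (hq1 : q ≤ 1) : ∀ m, 0 < crowdP q m m := by
  intro m
  induction m with
  | zero => simp [crowdP]
  | succ m ih =>
      simp only [crowdP]
      have h1 : q ^ (m + 1) ≤ 1 := pow_le_one₀ hq0.le hq1
      have h2 : 0 ≤ crowdP q m (m + 1) := crowdP_nonneg hq0.le hq1 m (m + 1)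
      have h3 : 0 < q ^ m := pow_pos hq0 m
      have : (m + 1 : ℕ) - 1 = m := by omega
      rw [if_neg (by omega : (m + 1 : ℕ) ≠ 0), this]
      nlinarith

lemma crowdG_rec (q : ℝ) (m : ℕ) (z : ℝ) :
    crowdG q (m + 1) z = crowdG q m z + (z - 1) * crowdG q m (q * z) := by
  unfold crowdG
  have expand : ∀ r ∈ Finset.range (m + 2), crowdP q (m + 1) r * z ^ r =
      (crowdP q m r * (1 - q ^ r)) * z ^ r +
        (if r = 0 then 0 else crowdP q m (r - 1) * q ^ (r - 1)) * z ^ r := by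
    intro r _; simp only [crowdP]; ring
  rw [Finset.sum_congr rfl expand, Finset.sum_add_distrib]
  have e1 : ∑ r ∈ Finset.range (m + 2), (crowdP q m r * (1 - q ^ r)) * z ^ r =
      ∑ r ∈ Finset.range (m + 1), (crowdP q m r * (1 - q ^ r)) * z ^ r := by
    rw [Finset.sum_range_succ, crowdP_eq_zero m (m + 1) (by omega)]; ring
  have e2 : ∑ r ∈ Finset.range (m + 2),
      (if r = 0 then 0 else crowdP q m (r - 1) * q ^ (r - 1)) * z ^ r =
      ∑ r ∈ Finset.range (m + 1), (crowdP q m r * q ^ r) * z ^ (r + 1) := by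
    rw [Finset.sum_range_succ' (fun r => (if r = 0 then 0 else crowdP q m (r - 1) * q ^ (r - 1)) * z ^ r) (m + 1)]
    simp
  rw [e1, e2]
  have e3 : ∀ r ∈ Finset.range (m+1), (crowdP q m r * (1 - q ^ r)) * z ^ r
      = crowdP q m r * z ^ r - crowdP q m r * (q*z) ^ r := by
    intro r _; rw [mul_pow]; ring
  have e4 : ∀ r ∈ Finset.range (m+1), (crowdP q m r * q ^ r) * z ^ (r+1)
      = z * (crowdP q m r * (q*z) ^ r) := by
    intro r _; rw [mul_pow]; ring
  rw [Finset.sum_congr rfl e3, Finset.sum_congr rfl e4, Finset.sum_sub_distrib, ← Finset.mul_sum]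
  ring

lemma crowdG_one {q : ℝ} : ∀ m, crowdG q m 1 = 1 := by
  intro m
  induction m with
  | zero => simp [crowdG, crowdP]
  | succ m ih => rw [crowdG_rec, ih]; ring

lemma sum_crowdP {q : ℝ} (m : ℕ) : ∑ r ∈ Finset.range (m + 1), crowdP q m r = 1 := by
  have := crowdG_one (q := q) m
  unfold crowdG at this
  simpa using this

lemma crowdMu_rec (q : ℝ) (m : ℕ) :
    crowdMu q (m + 1) = crowdMu q m + crowdG q m q := by
  unfold crowdMu crowdG
  have expand : ∀ r ∈ Finset.range (m + 2), (r : ℝ) * crowdP q (m + 1) r =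
      (r : ℝ) * (crowdP q m r * (1 - q ^ r)) +
        (r : ℝ) * (if r = 0 then 0 else crowdP q m (r - 1) * q ^ (r - 1)) := by
    intro r _; simp only [crowdP]; ring
  rw [Finset.sum_congr rfl expand, Finset.sum_add_distrib]
  have e1 : ∑ r ∈ Finset.range (m + 2), (r : ℝ) * (crowdP q m r * (1 - q ^ r)) =
      ∑ r ∈ Finset.range (m + 1), ((r : ℝ) * crowdP q m r - (r : ℝ) * (crowdP q m r * q ^ r)) := by
    rw [Finset.sum_range_succ, crowdP_eq_zero m (m + 1) (by omega)]
    rw [Finset.sum_congr rfl (fun (r : ℕ) _ => by ring :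
      ∀ r ∈ Finset.range (m+1), (r : ℝ) * (crowdP q m r * (1 - q ^ r))
        = (r : ℝ) * crowdP q m r - (r : ℝ) * (crowdP q m r * q ^ r))]
    ring
  have e2 : ∑ r ∈ Finset.range (m + 2),
      (r : ℝ) * (if r = 0 then 0 else crowdP q m (r - 1) * q ^ (r - 1)) =
      ∑ r ∈ Finset.range (m + 1), ((r : ℝ) + 1) * (crowdP q m r * q ^ r) := by
    rw [Finset.sum_range_succ' (fun r => (r : ℝ) * (if r = 0 then 0 else crowdP q m (r - 1) * q ^ (r - 1))) (m + 1)]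
    simp [add_comm]
  rw [e1, e2, Finset.sum_sub_distrib]
  rw [Finset.sum_congr rfl (fun (r : ℕ) _ => by ring :
    ∀ r ∈ Finset.range (m+1), ((r : ℝ) + 1) * (crowdP q m r * q ^ r)
      = (r : ℝ) * (crowdP q m r * q ^ r) + crowdP q m r * q ^ r)]
  rw [Finset.sum_add_distrib]
  ring

section
variable {q : ℝ} (hq0 : 0 < q) (hq1 : q < 1)
include hq0 hq1

lemma crowdG_nonneg (m : ℕ) {z : ℝ} (hz : 0 ≤ z) : 0 ≤ crowdG q m z :=
  Finset.sum_nonneg fun r _ => mul_nonneg (crowdP_nonneg hq0.le hq1.le m r) (pow_nonneg hz r)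

lemma crowdG_le_one (m : ℕ) {z : ℝ} (hz0 : 0 ≤ z) (hz1 : z ≤ 1) : crowdG q m z ≤ 1 := by
  rw [← sum_crowdP (q := q) m]
  apply Finset.sum_le_sum
  intro r _
  have := crowdP_nonneg hq0.le hq1.le m r
  nlinarith [pow_le_one₀ hz0 hz1 (n := r), pow_nonneg hz0 r]

lemma crowdG_sq_pos (m : ℕ) : 0 < crowdG q m (q ^ 2) := by
  have h1 : ∀ r ∈ Finset.range (m + 1), 0 ≤ crowdP q m r * (q ^ 2) ^ r :=
    fun r _ => mul_nonneg (crowdP_nonneg hq0.le hq1.le m r) (pow_nonneg (by positivity) r)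
  have h2 : 0 < crowdP q m m * (q ^ 2) ^ m :=
    mul_pos (crowdP_diag_pos hq0 hq1.le m) (pow_pos (by positivity) m)
  exact lt_of_lt_of_le h2 (Finset.single_le_sum h1 (Finset.self_mem_range_succ m))

-- Cauchy–Schwarz 1 : g² ≤ b·h
lemma cs1 (m : ℕ) : (crowdG q m (q ^ 2)) ^ 2 ≤ crowdG q m q * crowdG q m (q ^ 3) := by
  have key := Finset.sum_mul_sq_le_sq_mul_sq (Finset.range (m + 1))
      (fun r => Real.sqrt (crowdP q m r * q ^ r))
      (fun r => Real.sqrt (crowdP q m r * (q ^ 3) ^ r))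
  have e1 : ∀ r ∈ Finset.range (m + 1),
      Real.sqrt (crowdP q m r * q ^ r) * Real.sqrt (crowdP q m r * (q ^ 3) ^ r)
        = crowdP q m r * (q ^ 2) ^ r := by
    intro r _
    have hp := crowdP_nonneg hq0.le hq1.le m r
    rw [← Real.sqrt_mul (by positivity)]
    have e2 : (q ^ 2) ^ r = (q ^ r) ^ 2 := by rw [← pow_mul, ← pow_mul, mul_comm]
    have e3 : (q ^ 3) ^ r = (q ^ r) ^ 3 := by rw [← pow_mul, ← pow_mul, mul_comm]
    have : crowdP q m r * q ^ r * (crowdP q m r * (q ^ 3) ^ r)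
        = (crowdP q m r * (q ^ 2) ^ r) ^ 2 := by rw [e2, e3]; ring
    rw [this, Real.sqrt_sq (by positivity)]
  have e4 : ∀ r ∈ Finset.range (m + 1),
      Real.sqrt (crowdP q m r * q ^ r) ^ 2 = crowdP q m r * q ^ r := by
    intro r _
    have hp := crowdP_nonneg hq0.le hq1.le m r
    exact Real.sq_sqrt (by positivity)
  have e5 : ∀ r ∈ Finset.range (m + 1),
      Real.sqrt (crowdP q m r * (q ^ 3) ^ r) ^ 2 = crowdP q m r * (q ^ 3) ^ r := by
    intro r _
    have hp := crowdP_nonneg hq0.le hq1.le m r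
    exact Real.sq_sqrt (by positivity)
  rw [Finset.sum_congr rfl e1, Finset.sum_congr rfl e4, Finset.sum_congr rfl e5] at key
  exact key

-- Cauchy–Schwarz 2 : b² ≤ g
lemma cs2 (m : ℕ) : (crowdG q m q) ^ 2 ≤ crowdG q m (q ^ 2) := by
  have key := Finset.sum_mul_sq_le_sq_mul_sq (Finset.range (m + 1))
      (fun r => Real.sqrt (crowdP q m r))
      (fun r => Real.sqrt (crowdP q m r) * q ^ r)
  have e1 : ∀ r ∈ Finset.range (m + 1),
      Real.sqrt (crowdP q m r) * (Real.sqrt (crowdP q m r) * q ^ r) = crowdP q m r * q ^ r := by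
    intro r _
    have hp := crowdP_nonneg hq0.le hq1.le m r
    rw [← mul_assoc, Real.mul_self_sqrt hp]
  have e4 : ∀ r ∈ Finset.range (m + 1),
      Real.sqrt (crowdP q m r) ^ 2 = crowdP q m r := by
    intro r _
    exact Real.sq_sqrt (crowdP_nonneg hq0.le hq1.le m r)
  have e5 : ∀ r ∈ Finset.range (m + 1),
      (Real.sqrt (crowdP q m r) * q ^ r) ^ 2 = crowdP q m r * (q ^ 2) ^ r := by
    intro r _
    have e2 : (q ^ 2) ^ r = (q ^ r) ^ 2 := by rw [← pow_mul, ← pow_mul, mul_comm]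
    rw [mul_pow, Real.sq_sqrt (crowdP_nonneg hq0.le hq1.le m r), e2]
  rw [Finset.sum_congr rfl e1, Finset.sum_congr rfl e4, Finset.sum_congr rfl e5,
    sum_crowdP, one_mul] at key
  exact key

-- h ≥ g·√g
lemma h_lower (m : ℕ) :
    crowdG q m (q ^ 2) * Real.sqrt (crowdG q m (q ^ 2)) ≤ crowdG q m (q ^ 3) := by
  set g := crowdG q m (q ^ 2) with hg
  set h := crowdG q m (q ^ 3) with hh
  set b := crowdG q m q with hb
  have hgpos : 0 < g := crowdG_sq_pos hq0 hq1 m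
  have hspos : 0 < Real.sqrt g := Real.sqrt_pos.2 hgpos
  have hbnn : 0 ≤ b := crowdG_nonneg hq0 hq1 m hq0.le
  have hhnn : 0 ≤ h := crowdG_nonneg hq0 hq1 m (by positivity)
  have h1 : g ^ 2 ≤ b * h := cs1 hq0 hq1 m
  have h2 : b ≤ Real.sqrt g := (Real.le_sqrt hbnn hgpos.le).2 (cs2 hq0 hq1 m)
  have h3 : g ^ 2 ≤ Real.sqrt g * h := le_trans h1 (mul_le_mul_of_nonneg_right h2 hhnn)
  nlinarith [Real.mul_self_sqrt hgpos.le, hspos, h3]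

-- decay of √g
lemma sqrt_g_bound : ∀ m : ℕ,
    Real.sqrt (crowdG q m (q ^ 2)) * (1 + (1 - q ^ 2) * m / 2) ≤ 1 := by
  intro m
  induction m with
  | zero =>
      have : crowdG q 0 (q ^ 2) = 1 := by simp [crowdG, crowdP]
      rw [this]; simp
  | succ m ih =>
      set c := 1 - q ^ 2 with hc
      have hc0 : 0 < c := by nlinarith
      have hc1 : c ≤ 1 := by nlinarith
      set g := crowdG q m (q ^ 2) with hgdef
      set s := Real.sqrt g with hs
      have hgpos : 0 < g := crowdG_sq_pos hq0 hq1 m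
      have hg1 : g ≤ 1 := crowdG_le_one hq0 hq1 m (by positivity) (by nlinarith)
      have hs0 : 0 ≤ s := Real.sqrt_nonneg g
      have hs1 : s ≤ 1 := by rw [hs, show (1:ℝ) = Real.sqrt 1 by simp]; exact Real.sqrt_le_sqrt hg1
      have hsg : s ^ 2 = g := Real.sq_sqrt hgpos.le
      have hrec : crowdG q (m + 1) (q ^ 2) = g + (q ^ 2 - 1) * crowdG q m (q ^ 3) := by
        rw [crowdG_rec, show q * q ^ 2 = q ^ 3 by ring]
      have hup : crowdG q (m + 1) (q ^ 2) ≤ g - c * (g * s) := by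
        rw [hrec]
        have hlow := h_lower hq0 hq1 m
        rw [← hgdef, ← hs] at hlow
        have hhnn : 0 ≤ crowdG q m (q ^ 3) := crowdG_nonneg hq0 hq1 m (by positivity)
        nlinarith [mul_nonneg hc0.le (sub_nonneg.2 hlow)]
      clear_value s g c
      have hsq : g - c * (g * s) ≤ (s * (1 - c * s / 2)) ^ 2 := by
        rw [← hsg]; nlinarith [sq_nonneg (c * s ^ 2)]
      have hs' : Real.sqrt (crowdG q (m + 1) (q ^ 2)) ≤ s * (1 - c * s / 2) := by
        have h1 : crowdG q (m + 1) (q ^ 2) ≤ (s * (1 - c * s / 2)) ^ 2 := le_trans hup hsq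
        calc Real.sqrt (crowdG q (m + 1) (q ^ 2)) ≤ Real.sqrt ((s * (1 - c * s / 2)) ^ 2) :=
              Real.sqrt_le_sqrt h1
          _ = s * (1 - c * s / 2) := Real.sqrt_sq (by nlinarith)
      have goalcast : (1 : ℝ) + c * (↑(m + 1) : ℝ) / 2 = (1 + c * m / 2) + c / 2 := by
        push_cast; ring
      rw [goalcast]
      generalize htdef : (1:ℝ) + c * (m : ℝ) / 2 = t at ih
      have ht1 : (1:ℝ) ≤ t := by
        rw [← htdef]
        have : (0:ℝ) ≤ (m:ℝ) := Nat.cast_nonneg m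
        nlinarith
      have hst : s * t ≤ 1 := ih
      have hs'nn : 0 ≤ Real.sqrt (crowdG q (m + 1) (q ^ 2)) := Real.sqrt_nonneg _
      have hsc : s * c ≤ 1 := by nlinarith [mul_le_mul hs1 hc1 hc0.le zero_le_one]
      have step2 : s * (1 - c * s / 2) * (t + c / 2) ≤ 1 := by
        have k1 : 0 ≤ (1 - s * t) * (1 - s * c / 2) :=
          mul_nonneg (by linarith) (by linarith)
        nlinarith [k1, sq_nonneg (c * s)]
      calc Real.sqrt (crowdG q (m + 1) (q ^ 2)) * (t + c / 2)
          ≤ s * (1 - c * s / 2) * (t + c / 2) :=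
            mul_le_mul_of_nonneg_right hs' (by nlinarith)
        _ ≤ 1 := step2
end

lemma crowdG_inv {q : ℝ} (hq : q ≠ 0) : ∀ m : ℕ, crowdG q m q⁻¹ = 1 + m * (q⁻¹ - 1) := by
  intro m
  induction m with
  | zero => simp [crowdG, crowdP]
  | succ m ih =>
      rw [crowdG_rec, ih, mul_inv_cancel₀ hq, crowdG_one]
      push_cast; ring

section
variable {α : ℝ} (hα : 0 < α)
include hα

lemma exp_mu_le (m : ℕ) :
    Real.exp (α * crowdMu (Real.exp (-α)) m) ≤ 1 + (Real.exp α - 1) * m := by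
  set q := Real.exp (-α) with hqdef
  have hq0 : 0 < q := Real.exp_pos _
  have hq1 : q < 1 := Real.exp_lt_one_iff.2 (by linarith)
  have hconv : ConvexOn ℝ Set.univ (fun x : ℝ => Real.exp (α * x)) := by
    constructor
    · exact convex_univ
    · intro x _ y _ a b ha hb hab
      have h := convexOn_exp.2 (Set.mem_univ (α * x)) (Set.mem_univ (α * y)) ha hb hab
      simp only [smul_eq_mul] at h ⊢
      have harg : α * (a * x + b * y) = a * (α * x) + b * (α * y) := by ring
      rw [harg]
      exact h
  have jensen := hconv.map_sum_le (t := Finset.range (m + 1))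
    (w := fun r => crowdP q m r) (p := fun r => (r : ℝ))
    (fun r _ => crowdP_nonneg hq0.le hq1.le m r) (sum_crowdP m)
    (fun r _ => Set.mem_univ _)
  simp only [smul_eq_mul] at jensen
  have e1 : ∑ r ∈ Finset.range (m + 1), crowdP q m r * (r : ℝ) = crowdMu q m := by
    unfold crowdMu
    exact Finset.sum_congr rfl (fun r _ => mul_comm _ _)
  have e2 : ∑ r ∈ Finset.range (m + 1), crowdP q m r * Real.exp (α * r) = crowdG q m q⁻¹ := by
    unfold crowdG
    refine Finset.sum_congr rfl (fun r _ => ?_)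
    congr 1
    have hqinv : q⁻¹ = Real.exp α := by rw [hqdef, Real.exp_neg, inv_inv]
    rw [hqinv, ← Real.exp_nat_mul, mul_comm]
  rw [e1, e2, crowdG_inv (ne_of_gt hq0)] at jensen
  have hqinv : q⁻¹ = Real.exp α := by rw [hqdef, Real.exp_neg, inv_inv]
  rw [hqinv] at jensen
  calc Real.exp (α * crowdMu q m) ≤ 1 + m * (Real.exp α - 1) := jensen
    _ = 1 + (Real.exp α - 1) * m := by ring

lemma mu_upper (m : ℕ) :
    crowdMu (Real.exp (-α)) m ≤ (1 / α) * Real.log (1 + (Real.exp α - 1) * m) := by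
  have hE : (1:ℝ) ≤ Real.exp α := Real.one_le_exp hα.le
  have hA0 : (0:ℝ) < 1 + (Real.exp α - 1) * m := by
    have : (0:ℝ) ≤ (m:ℝ) := Nat.cast_nonneg m
    nlinarith
  have h := Real.log_le_log (Real.exp_pos _) (exp_mu_le hα m)
  rw [Real.log_exp] at h
  have h2 : crowdMu (Real.exp (-α)) m * α ≤ Real.log (1 + (Real.exp α - 1) * m) := by
    rw [mul_comm]; exact h
  have h3 := (le_div_iff₀ hα).2 h2
  rw [div_eq_inv_mul] at h3
  rwa [one_div]

set_option maxHeartbeats 1000000 in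
lemma mu_lower (m : ℕ) (hm : 1 ≤ m) :
    (1 / α) * Real.log (1 + (Real.exp α - 1) * m) - crowdMu (Real.exp (-α)) m ≤
      2 * (Real.exp α) ^ 2 / (α * (1 - Real.exp (-α) ^ 2) ^ 2) := by
  set q := Real.exp (-α) with hqdef
  have hq0 : 0 < q := Real.exp_pos _
  have hq1 : q < 1 := Real.exp_lt_one_iff.2 (by linarith)
  set E := Real.exp α with hEdef
  have hE : (1:ℝ) ≤ E := Real.one_le_exp hα.le
  have hm1 : (1:ℝ) ≤ (m:ℝ) := by exact_mod_cast hm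
  set A := 1 + (E - 1) * (m:ℝ) with hAdef
  have hA0 : (0:ℝ) < A := by nlinarith
  set L := (1 / α) * Real.log A with hLdef
  set g := crowdG q m (q ^ 2) with hgdef
  set c := 1 - q ^ 2 with hcdef
  have hc0 : 0 < c := by nlinarith
  -- termwise bound
  have tb : ∀ r : ℕ, L - (r:ℝ) ≤ A ^ 2 / (2 * α) * (q ^ 2) ^ r := by
    intro r
    have base : L - (r:ℝ) ≤ Real.exp (2 * α * (L - r)) / (2 * α) := by
      rw [le_div_iff₀ (by positivity)]
      nlinarith [Real.add_one_le_exp (2 * α * (L - r))]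
    have eA : Real.exp (2 * α * L) = A ^ 2 := by
      have hαL : α * L = Real.log A := by rw [hLdef]; field_simp
      have : 2 * α * L = Real.log A + Real.log A := by rw [← hαL]; ring
      rw [this, Real.exp_add, Real.exp_log hA0]; ring
    have eB : (q ^ 2) ^ r = Real.exp (-(2 * α * r)) := by
      rw [← pow_mul, hqdef, ← Real.exp_nat_mul]
      congr 1
      push_cast; ring
    have eid : Real.exp (2 * α * (L - r)) = A ^ 2 * (q ^ 2) ^ r := by
      rw [show 2 * α * (L - (r:ℝ)) = 2 * α * L + (-(2 * α * r)) by ring,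
        Real.exp_add, eA, eB]
    calc L - (r:ℝ) ≤ Real.exp (2 * α * (L - r)) / (2 * α) := base
      _ = A ^ 2 / (2 * α) * (q ^ 2) ^ r := by rw [eid]; ring
  -- sum bound
  have key : L - crowdMu q m ≤ A ^ 2 / (2 * α) * g := by
    have e0 : L - crowdMu q m = ∑ r ∈ Finset.range (m + 1), crowdP q m r * (L - r) := by
      unfold crowdMu
      rw [Finset.sum_congr rfl (fun (r : ℕ) _ => by ring :
        ∀ r ∈ Finset.range (m + 1), crowdP q m r * (L - r)
          = crowdP q m r * L - (r:ℝ) * crowdP q m r)]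
      rw [Finset.sum_sub_distrib, ← Finset.sum_mul, sum_crowdP, one_mul]
    rw [e0, hgdef]
    unfold crowdG
    rw [Finset.mul_sum]
    apply Finset.sum_le_sum
    intro r _
    have hP := crowdP_nonneg hq0.le hq1.le m r
    calc crowdP q m r * (L - r) ≤ crowdP q m r * (A ^ 2 / (2 * α) * (q ^ 2) ^ r) :=
          mul_le_mul_of_nonneg_left (tb r) hP
      _ = A ^ 2 / (2 * α) * (crowdP q m r * (q ^ 2) ^ r) := by ring
  -- bound A^2 * g
  have hg0 : 0 ≤ g := crowdG_nonneg hq0 hq1 m (by positivity)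
  have hgt : g * (1 + c * m / 2) ^ 2 ≤ 1 := by
    have h1 := sqrt_g_bound hq0 hq1 m
    have h2 : (Real.sqrt g * (1 + c * m / 2)) ^ 2 ≤ 1 ^ 2 := by
      apply pow_le_pow_left₀ (by positivity) _ 2
      · rw [hgdef, hcdef]; exact h1
    rw [mul_pow, Real.sq_sqrt hg0] at h2
    simpa using h2
  clear_value q E A L g c
  have hAE : A ≤ E * m := by nlinarith
  have habound : A ^ 2 * g ≤ 4 * E ^ 2 / c ^ 2 := by
    rw [le_div_iff₀ (by positivity)]
    have htc : c * m / 2 ≤ 1 + c * m / 2 := by linarith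
    have hcm0 : 0 ≤ c * m / 2 := by positivity
    have s2 : (c * m / 2) ^ 2 ≤ (1 + c * m / 2) ^ 2 := by nlinarith
    have s3 : g * (c * m / 2) ^ 2 ≤ 1 := le_trans (by nlinarith) hgt
    have s1 : A ^ 2 ≤ (E * m) ^ 2 := by nlinarith
    nlinarith [mul_le_mul_of_nonneg_right s1 (show (0:ℝ) ≤ g * c ^ 2 by positivity), s3,
      mul_pos (lt_of_lt_of_le zero_lt_one hE) (lt_of_lt_of_le zero_lt_one hm1)]
  calc L - crowdMu q m ≤ A ^ 2 / (2 * α) * g := key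
    _ = A ^ 2 * g / (2 * α) := by ring
    _ ≤ (4 * E ^ 2 / c ^ 2) / (2 * α) := by
        apply div_le_div_of_nonneg_right ?_ (by positivity)
        · exact habound
    _ = 2 * E ^ 2 / (α * c ^ 2) := by field_simp; ring
end


theorem stmt_10 (α : ℝ) (hα : 0 < α) :
    (∃ C : ℝ, ∀ m : ℕ, 2 ≤ m →
      |crowdMu (Real.exp (-α)) m - (1 / α) * Real.log m| ≤ C) ∧
    Filter.Tendsto
      (fun N : ℕ => crowdMu (Real.exp (-α)) (N - 1) / ((1 / α) * Real.log N))
      Filter.atTop (nhds 1) := by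
  have hE1 : (1:ℝ) < Real.exp α := by
    rw [show (1:ℝ) = Real.exp 0 by simp]; exact Real.exp_lt_exp.2 hα
  have hq0 : (0:ℝ) < Real.exp (-α) := Real.exp_pos _
  have hq1 : Real.exp (-α) < 1 := Real.exp_lt_one_iff.2 (by linarith)
  set C₁ := 2 * (Real.exp α) ^ 2 / (α * (1 - Real.exp (-α) ^ 2) ^ 2) with hC₁
  set C₂ := (1 / α) * (α + |Real.log (Real.exp α - 1)|) with hC₂
  have hC₁0 : 0 ≤ C₁ := by positivity
  have hC₂0 : 0 ≤ C₂ := by positivity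
  have hbound : ∀ m : ℕ, 1 ≤ m →
      |crowdMu (Real.exp (-α)) m - (1 / α) * Real.log m| ≤ C₁ + C₂ := by
    intro m hm
    have hm1 : (1:ℝ) ≤ (m:ℝ) := by exact_mod_cast hm
    have hm0 : (0:ℝ) < (m:ℝ) := by linarith
    set E := Real.exp α with hE
    set A := 1 + (E - 1) * (m:ℝ) with hA
    have hA0 : (0:ℝ) < A := by nlinarith
    set L := (1 / α) * Real.log A with hL
    have h1 : crowdMu (Real.exp (-α)) m ≤ L := mu_upper hα m
    have h2 : L - crowdMu (Real.exp (-α)) m ≤ C₁ := mu_lower hα m hm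
    have parta : |crowdMu (Real.exp (-α)) m - L| ≤ C₁ := abs_le.2 ⟨by linarith, by linarith⟩
    have partb : |L - (1 / α) * Real.log m| ≤ C₂ := by
      have hE1' : (0:ℝ) < E - 1 := by linarith
      have hAm_lo : E - 1 ≤ A / m := (le_div_iff₀ hm0).2 (by nlinarith)
      have hAm_hi : A / m ≤ E := (div_le_iff₀ hm0).2 (by nlinarith)
      have hlog1 : Real.log (E - 1) ≤ Real.log (A / m) := Real.log_le_log hE1' hAm_lo
      have hlog2 : Real.log (A / m) ≤ α := by
        calc Real.log (A / m) ≤ Real.log E := Real.log_le_log (div_pos hA0 hm0) hAm_hi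
          _ = α := by rw [hE, Real.log_exp]
      have habs : |Real.log (A / m)| ≤ α + |Real.log (E - 1)| := by
        refine abs_le.2 ⟨?_, by linarith [abs_nonneg (Real.log (E - 1))]⟩
        have := neg_abs_le (Real.log (E - 1))
        linarith
      have hdiv : Real.log (A / m) = Real.log A - Real.log m :=
        Real.log_div (ne_of_gt hA0) (ne_of_gt hm0)
      have heq : L - (1 / α) * Real.log m = (1 / α) * Real.log (A / m) := by
        rw [hdiv, hL]; ring
      rw [heq, hC₂, abs_mul, abs_of_pos (show (0:ℝ) < 1 / α by positivity)]
      exact mul_le_mul_of_nonneg_left habs (by positivity)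
    calc |crowdMu (Real.exp (-α)) m - (1 / α) * Real.log m|
        = |(crowdMu (Real.exp (-α)) m - L) + (L - (1 / α) * Real.log m)| := by ring_nf
      _ ≤ |crowdMu (Real.exp (-α)) m - L| + |L - (1 / α) * Real.log m| := abs_add_le _ _
      _ ≤ C₁ + C₂ := add_le_add parta partb
  constructor
  · exact ⟨C₁ + C₂, fun m hm => hbound m (by omega)⟩
  · set D := (C₁ + C₂) + (1 / α) * Real.log 2 with hD
    have h1 : Tendsto (fun N : ℕ => (1 / α) * Real.log N) atTop atTop :=
      Tendsto.const_mul_atTop (show (0:ℝ) < 1 / α by positivity)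
        (Real.tendsto_log_atTop.comp tendsto_natCast_atTop_atTop)
    have h0 : Tendsto (fun N : ℕ => D / ((1 / α) * Real.log N)) atTop (nhds 0) :=
      tendsto_const_nhds.div_atTop h1
    have hsq : Tendsto
        (fun N : ℕ => crowdMu (Real.exp (-α)) (N - 1) / ((1 / α) * Real.log N) - 1)
        atTop (nhds 0) := by
      apply squeeze_zero_norm' ?_ h0
      filter_upwards [eventually_ge_atTop 3] with N hN
      have hN3 : (3:ℝ) ≤ (N:ℝ) := by exact_mod_cast hN
      have hN0 : (0:ℝ) < (N:ℝ) := by linarith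
      have hcast : ((N - 1 : ℕ) : ℝ) = (N:ℝ) - 1 := by
        rw [Nat.cast_sub (by omega)]; norm_num
      have hN1 : (0:ℝ) < (N:ℝ) - 1 := by linarith
      have hLN : (0:ℝ) < (1 / α) * Real.log N := by
        have : (0:ℝ) < Real.log N := Real.log_pos (by linarith)
        positivity
      set LN := (1 / α) * Real.log N with hLNdef
      have hb := hbound (N - 1) (by omega)
      rw [hcast] at hb
      have hlog_mono : Real.log ((N:ℝ) - 1) ≤ Real.log N := Real.log_le_log hN1 (by linarith)
      have hlogdiff : Real.log (N:ℝ) - Real.log ((N:ℝ) - 1) ≤ Real.log 2 := by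
        have h2' : (N:ℝ) ≤ 2 * ((N:ℝ) - 1) := by linarith
        have := Real.log_le_log hN0 h2'
        rw [Real.log_mul (by norm_num) (ne_of_gt hN1)] at this
        linarith
      have hclose : |crowdMu (Real.exp (-α)) (N - 1) - LN| ≤ D := by
        have t1 : |crowdMu (Real.exp (-α)) (N - 1) - (1 / α) * Real.log ((N:ℝ) - 1)| ≤ C₁ + C₂ := hb
        have t2 : |(1 / α) * Real.log ((N:ℝ) - 1) - LN| ≤ (1 / α) * Real.log 2 := by
          rw [hLNdef, ← mul_sub, abs_mul, abs_of_pos (show (0:ℝ) < 1 / α by positivity)]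
          apply mul_le_mul_of_nonneg_left _ (by positivity)
          rw [abs_le]
          constructor
          · have : (0:ℝ) ≤ Real.log 2 := Real.log_nonneg (by norm_num)
            linarith
          · linarith
        calc |crowdMu (Real.exp (-α)) (N - 1) - LN|
            = |(crowdMu (Real.exp (-α)) (N - 1) - (1 / α) * Real.log ((N:ℝ) - 1)) +
                ((1 / α) * Real.log ((N:ℝ) - 1) - LN)| := by ring_nf
          _ ≤ |crowdMu (Real.exp (-α)) (N - 1) - (1 / α) * Real.log ((N:ℝ) - 1)| +
                |(1 / α) * Real.log ((N:ℝ) - 1) - LN| := abs_add_le _ _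
          _ ≤ (C₁ + C₂) + (1 / α) * Real.log 2 := add_le_add t1 t2
          _ = D := hD.symm
      rw [Real.norm_eq_abs, div_sub_one (ne_of_gt hLN), abs_div, abs_of_pos hLN]
      exact div_le_div_of_nonneg_right hclose hLN.le
    have := hsq.add_const 1
    simpa using this
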